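/- (Theorem 1.2) Fix d ≥ 1 and an onsite symmetry (G, u). Let Ω be a flow: an assignment, to every finite type Λ' of sites, subsets A, B ⊆ Λ', and G-symmetric unitary U on ι(Λ') = Λ' → Fin d, of a real number Ω^{Λ'}_{A,B}(U), satisfying properties (1)–(4) of a flow. Let Λ be a finite metric space of sites and U a G-symmetric strict LPU on Λ with operator spreading length ξ. Then: (i) for every a ∈ A with a ∉ ∂_{4ξ} B, Ω^Λ_{A,B}(U) = Ω^Λ_{A∖{a},B}(U); and (ii) for every b ∈ B with b ∉ ∂_{4ξ} A, Ω^Λ_{A,B}(U) = Ω^Λ_{A,B∖{b}}(U). -/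

import Mathlib

/-!
Stack `U` with the identity on a second copy of the lattice, taking the regions `A ⊔ (A ∖ {a})`
and `B ⊔ B`: by axioms (3) and (4), `Ω(U ⊗ 1) = Ω_{A,B}(U)` and `Ω(1 ⊗ U) = Ω_{A∖{a},B}(U)`.
Let `S_D` exchange the two copies of the sites of `D`. Multiplying `U ⊗ 1` on the right by
`K = (U ⊗ 1)† S_a (U ⊗ 1) S_a` gives `S_a (U ⊗ 1) S_a`; since `K` is supported on the ball of
radius `ξ` about `a` in the first copy and on `a` in the second, it lies entirely inside or
entirely outside `B ⊔ B`, so axiom (2) leaves `Ω` unchanged. Conjugating further by the exchanges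
of the remaining sites, one at a time, is allowed by axioms (1) and (2) because `A` and `A ∖ {a}`
agree there, and it ends at `1 ⊗ U`. Part (ii) is part (i) for the flow `Ω_{B,A}(U†)`.
-/

open Matrix

/-- A matrix on the many-body space `ι = Λ → Fin d` is supported on `S ⊆ Λ` if its entries
vanish whenever the two configurations differ at a site outside `S`, and otherwise depend
only on the restrictions of the configurations to `S`. -/
def SupportedOn {Λ : Type*} {d : ℕ} (S : Set Λ)
    (M : Matrix (Λ → Fin d) (Λ → Fin d) ℂ) : Prop :=
  (∀ x y, (∃ r ∉ S, x r ≠ y r) → M x y = 0) ∧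
  (∀ x y x' y', (∀ r ∈ S, x r = x' r) → (∀ r ∈ S, y r = y' r) →
    (∀ r ∉ S, x r = y r) → (∀ r ∉ S, x' r = y' r) → M x y = M x' y')

/-- A matrix is unitary if `Mᴴ M = 1 = M Mᴴ`. -/
def IsUnitaryMat {ι : Type*} [Fintype ι] [DecidableEq ι] (M : Matrix ι ι ℂ) : Prop :=
  Mᴴ * M = 1 ∧ M * Mᴴ = 1

/-- The global onsite symmetry operator `U_g`, with entries `∏_r u(g)_{x(r),y(r)}`. -/
def symOp {Λ : Type*} [Fintype Λ] {d : ℕ} {G : Type*}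
    (u : G → Matrix (Fin d) (Fin d) ℂ) (g : G) :
    Matrix (Λ → Fin d) (Λ → Fin d) ℂ :=
  Matrix.of fun x y => ∏ r, u g (x r) (y r)

/-- A matrix is `G`-symmetric if it commutes with every global symmetry operator. -/
def IsGSymm {Λ : Type*} [Fintype Λ] [DecidableEq Λ] {d : ℕ} {G : Type*}
    (u : G → Matrix (Fin d) (Fin d) ℂ)
    (M : Matrix (Λ → Fin d) (Λ → Fin d) ℂ) : Prop :=
  ∀ g, M * symOp u g = symOp u g * M

/-- The `ℓ`-thickened boundary `∂_ℓ S = {r : dist(r,S) ≤ ℓ and dist(r,Λ∖S) ≤ ℓ}`. -/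
def thickBd {Λ : Type*} [MetricSpace Λ] (ℓ : ℝ) (S : Set Λ) : Set Λ :=
  {r | (∃ s ∈ S, dist r s ≤ ℓ) ∧ (∃ s ∈ Sᶜ, dist r s ≤ ℓ)}

/-- A strict locality-preserving unitary with operator spreading length `ξ`: conjugation
maps any operator supported on a single site `r` to one supported in the closed ball of
radius `ξ` around `r`. -/
def IsStrictLPU {Λ : Type*} [Fintype Λ] [DecidableEq Λ] [MetricSpace Λ] {d : ℕ}
    (ξ : ℝ) (U : Matrix (Λ → Fin d) (Λ → Fin d) ℂ) : Prop :=
  IsUnitaryMat U ∧ ∀ (r : Λ) (O : Matrix (Λ → Fin d) (Λ → Fin d) ℂ),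
    SupportedOn {r} O → SupportedOn (Metric.closedBall r ξ) (Uᴴ * O * U)

/-- A flow: an assignment, to every finite lattice `Λ'`, subsets `A, B ⊆ Λ'` and
`G`-symmetric unitary `U` on `Λ' → Fin d`, of a real number `Ω^{Λ'}_{A,B}(U)`, satisfying
the four defining properties of Definition 1. -/
structure LatticeFlow (d : ℕ) (G : Type) [Group G] (u : G → Matrix (Fin d) (Fin d) ℂ) where
  omega : (Λ' : Type) → [Fintype Λ'] → [DecidableEq Λ'] → Set Λ' → Set Λ' →
    Matrix (Λ' → Fin d) (Λ' → Fin d) ℂ → ℝ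
  /-- (1): invariance under left multiplication by `G`-symmetric unitaries supported on
  `A` or on its complement. -/
  left_inv : ∀ (Λ' : Type) [Fintype Λ'] [DecidableEq Λ'] (A B : Set Λ')
    (U V : Matrix (Λ' → Fin d) (Λ' → Fin d) ℂ),
    IsUnitaryMat U → IsGSymm u U → IsUnitaryMat V → IsGSymm u V →
    (SupportedOn A V ∨ SupportedOn Aᶜ V) →
    omega Λ' A B (V * U) = omega Λ' A B U
  /-- (2): invariance under right multiplication by `G`-symmetric unitaries supported on
  `B` or on its complement. -/
  right_inv : ∀ (Λ' : Type) [Fintype Λ'] [DecidableEq Λ'] (A B : Set Λ')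
    (U V : Matrix (Λ' → Fin d) (Λ' → Fin d) ℂ),
    IsUnitaryMat U → IsGSymm u U → IsUnitaryMat V → IsGSymm u V →
    (SupportedOn B V ∨ SupportedOn Bᶜ V) →
    omega Λ' A B (U * V) = omega Λ' A B U
  /-- (3): additivity under stacking (disjoint-union lattices and Kronecker products). -/
  stacking : ∀ (Λ₁ Λ₂ : Type) [Fintype Λ₁] [DecidableEq Λ₁] [Fintype Λ₂] [DecidableEq Λ₂]
    (A₁ B₁ : Set Λ₁) (A₂ B₂ : Set Λ₂)
    (U₁ : Matrix (Λ₁ → Fin d) (Λ₁ → Fin d) ℂ) (U₂ : Matrix (Λ₂ → Fin d) (Λ₂ → Fin d) ℂ),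
    IsUnitaryMat U₁ → IsGSymm u U₁ → IsUnitaryMat U₂ → IsGSymm u U₂ →
    omega (Λ₁ ⊕ Λ₂) (Sum.inl '' A₁ ∪ Sum.inr '' A₂) (Sum.inl '' B₁ ∪ Sum.inr '' B₂)
      (Matrix.reindex (Equiv.sumArrowEquivProdArrow Λ₁ Λ₂ (Fin d)).symm
        (Equiv.sumArrowEquivProdArrow Λ₁ Λ₂ (Fin d)).symm
        (Matrix.kroneckerMap (· * ·) U₁ U₂)) =
      omega Λ₁ A₁ B₁ U₁ + omega Λ₂ A₂ B₂ U₂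
  /-- (4): normalization `Ω_{A,B}(𝟙) = 0`. -/
  norm_one : ∀ (Λ' : Type) [Fintype Λ'] [DecidableEq Λ'] (A B : Set Λ'),
    omega Λ' A B 1 = 0

abbrev Op (Γ : Type*) (d : ℕ) := Matrix (Γ → Fin d) (Γ → Fin d) ℂ

namespace SupportedOn

variable {Γ : Type*} {d : ℕ} {S T : Set Γ} {M N : Op Γ d}

theorem mono (hM : SupportedOn S M) (h : S ⊆ T) : SupportedOn T M := by
  refine ⟨fun x y ⟨r, hr, hne⟩ => hM.1 x y ⟨r, fun hS => hr (h hS), hne⟩, ?_⟩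
  intro x y x' y' hx hy hxy hxy'
  by_cases hc : ∀ r ∉ S, x r = y r
  · refine hM.2 x y x' y' (fun r hr => hx r (h hr)) (fun r hr => hy r (h hr)) hc fun r hr => ?_
    by_cases hrT : r ∈ T
    · rw [← hx r hrT, ← hy r hrT]; exact hc r hr
    · exact hxy' r hrT
  · push Not at hc
    obtain ⟨r, hrS, hne⟩ := hc
    have hrT : r ∈ T := by_contra fun hrT => hne (hxy r hrT)
    have hne' : x' r ≠ y' r := by rwa [← hx r hrT, ← hy r hrT]
    rw [hM.1 x y ⟨r, hrS, hne⟩, hM.1 x' y' ⟨r, hrS, hne'⟩]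

theorem add (hM : SupportedOn S M) (hN : SupportedOn S N) : SupportedOn S (M + N) :=
  ⟨fun x y h => by simp [hM.1 x y h, hN.1 x y h],
    fun x y x' y' hx hy hxy hxy' => by
      simp [hM.2 x y x' y' hx hy hxy hxy', hN.2 x y x' y' hx hy hxy hxy']⟩

theorem conjTranspose (hM : SupportedOn S M) : SupportedOn S Mᴴ := by
  refine ⟨fun x y ⟨r, hr, hne⟩ => ?_, fun x y x' y' hx hy hxy hxy' => ?_⟩
  · simp [hM.1 y x ⟨r, hr, Ne.symm hne⟩]
  · simp only [Matrix.conjTranspose_apply]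
    rw [hM.2 y x y' x' hy hx (fun r hr => (hxy r hr).symm) fun r hr => (hxy' r hr).symm]

open Classical in
theorem mul [Fintype Γ] [DecidableEq Γ] (hM : SupportedOn S M) (hN : SupportedOn S N) :
    SupportedOn S (M * N) := by
  refine ⟨fun x y ⟨r, hr, hne⟩ => ?_, fun x y x' y' hx hy hxy hxy' => ?_⟩
  · rw [Matrix.mul_apply]
    refine Finset.sum_eq_zero fun z _ => ?_
    by_cases hz : x r = z r
    · rw [hN.1 z y ⟨r, hr, hz ▸ hne⟩, mul_zero]
    · rw [hM.1 x z ⟨r, hr, hz⟩, zero_mul]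
  · -- `φ` carries the values of `x` off `S` to those of `x'`, matching the intermediate
    -- configurations of `(M * N) x y` with those of `(M * N) x' y'`.
    let φ : (Γ → Fin d) ≃ (Γ → Fin d) := Equiv.piCongrRight fun t =>
      if t ∈ S then Equiv.refl (Fin d) else Equiv.swap (x t) (x' t)
    have hφ : ∀ z t, φ z t = if t ∈ S then z t else Equiv.swap (x t) (x' t) (z t) := by
      intro z t
      simp only [φ, Equiv.piCongrRight_apply, Pi.map_apply]
      split_ifs <;> rfl
    rw [Matrix.mul_apply, Matrix.mul_apply, ← Equiv.sum_comp φ fun z => M x' z * N z y']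
    refine Finset.sum_congr rfl fun z _ => ?_
    by_cases hzx : ∀ t ∉ S, z t = x t
    · have hφS : ∀ t ∈ S, z t = φ z t := fun t ht => by rw [hφ, if_pos ht]
      have hφ' : ∀ t ∉ S, φ z t = x' t := fun t ht => by
        rw [hφ, if_neg ht, hzx t ht, Equiv.swap_apply_left]
      rw [hM.2 x z x' (φ z) hx hφS (fun t ht => (hzx t ht).symm) fun t ht => (hφ' t ht).symm,
        hN.2 z y (φ z) y' hφS hy (fun t ht => (hzx t ht).trans (hxy t ht))
          fun t ht => (hφ' t ht).trans (hxy' t ht)]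
    · push Not at hzx
      obtain ⟨t, ht, hne⟩ := hzx
      have hφne : x' t ≠ φ z t := fun h => hne <| by
        rwa [hφ, if_neg ht, eq_comm, Equiv.swap_apply_eq_iff, Equiv.swap_apply_right] at h
      rw [hM.1 x z ⟨t, ht, Ne.symm hne⟩, hM.1 x' (φ z) ⟨t, ht, hφne⟩, zero_mul, zero_mul]

end SupportedOn

theorem supportedOn_zero {Γ : Type*} {d : ℕ} (S : Set Γ) : SupportedOn S (0 : Op Γ d) :=
  ⟨fun _ _ _ => rfl, fun _ _ _ _ _ _ _ _ => rfl⟩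

section

variable {Γ : Type*} [Fintype Γ] {d : ℕ}

theorem supportedOn_one (S : Set Γ) : SupportedOn S (1 : Op Γ d) := by
  refine ⟨fun x y ⟨r, _, hne⟩ => Matrix.one_apply_ne fun h => hne (congrFun h r),
    fun x y x' y' hx hy hxy hxy' => ?_⟩
  have : x = y ↔ x' = y' := by
    simp only [funext_iff]
    refine ⟨fun h r => ?_, fun h r => ?_⟩ <;> by_cases hr : r ∈ S
    · rw [← hx r hr, ← hy r hr]; exact h r
    · exact hxy' r hr
    · rw [hx r hr, hy r hr]; exact h r
    · exact hxy r hr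
  simp only [Matrix.one_apply, this]

/-- An operator supported on no site is a scalar. -/
theorem commute_of_supportedOn_empty [DecidableEq Γ] {O : Op Γ d} (hO : SupportedOn ∅ O)
    (M : Op Γ d) : Commute O M := by
  have hoff : ∀ x y, x ≠ y → O x y = 0 := fun x y h =>
    have ⟨r, hr⟩ := Function.ne_iff.mp h
    hO.1 x y ⟨r, Set.notMem_empty r, hr⟩
  have hdiag : ∀ x y, O x x = O y y := fun x y =>
    hO.2 x x y y (by simp) (by simp) (fun _ _ => rfl) fun _ _ => rfl
  ext x y
  rw [Matrix.mul_apply, Matrix.mul_apply, Finset.sum_eq_single x, Finset.sum_eq_single y,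
    hdiag x y, mul_comm]
  · exact fun z _ hz => by rw [hoff z y hz, mul_zero]
  · simp
  · exact fun z _ hz => by rw [hoff x z (Ne.symm hz), zero_mul]
  · simp

end

section SiteUnit

variable {Γ : Type*} [DecidableEq Γ] {d : ℕ}

/-- The coefficient of `siteUnit r i j` in `O`, acting trivially on site `r`
(see `sum_siteUnit_mul_siteSlice`). -/
def siteSlice (r : Γ) (i j : Fin d) (O : Op Γ d) : Op Γ d :=
  Matrix.of fun x y => if x r = y r then O (Function.update x r i) (Function.update y r j) else 0

variable {S : Set Γ} {M : Op Γ d}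

theorem SupportedOn.siteSlice (hM : SupportedOn S M) {r : Γ} (hr : r ∈ S) (i j : Fin d) :
    SupportedOn (S \ {r}) (siteSlice r i j M) := by
  refine ⟨fun x y ⟨t, ht, hne⟩ => ?_, fun x y x' y' hx hy hxy hxy' => ?_⟩
  · simp only [_root_.siteSlice, Matrix.of_apply, ite_eq_right_iff]
    intro hxyr
    have htr : t ≠ r := fun h => hne (h ▸ hxyr)
    exact hM.1 _ _ ⟨t, fun h => ht ⟨h, htr⟩, by simpa [Function.update_of_ne htr] using hne⟩
  · simp only [_root_.siteSlice, Matrix.of_apply, if_pos (hxy r fun h => h.2 rfl),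
      if_pos (hxy' r fun h => h.2 rfl)]
    refine hM.2 _ _ _ _ (fun t ht => ?_) (fun t ht => ?_) (fun t ht => ?_) fun t ht => ?_
    · by_cases htr : t = r
      · simp [htr]
      · simp [Function.update_of_ne htr, hx t ⟨ht, htr⟩]
    · by_cases htr : t = r
      · simp [htr]
      · simp [Function.update_of_ne htr, hy t ⟨ht, htr⟩]
    · have htr : t ≠ r := fun h => ht (h ▸ hr)
      simp [Function.update_of_ne htr, hxy t fun h => ht h.1]
    · have htr : t ≠ r := fun h => ht (h ▸ hr)
      simp [Function.update_of_ne htr, hxy' t fun h => ht h.1]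

variable [Fintype Γ]

def siteUnit (s : Γ) (i j : Fin d) : Op Γ d :=
  Matrix.of fun x y => if x s = i ∧ y s = j ∧ ∀ t ≠ s, x t = y t then 1 else 0

theorem supportedOn_siteUnit (s : Γ) (i j : Fin d) : SupportedOn {s} (siteUnit s i j) := by
  refine ⟨fun x y ⟨r, hr, hne⟩ => ?_, fun x y x' y' hx hy hxy hxy' => ?_⟩
  · simp only [siteUnit, Matrix.of_apply, ite_eq_right_iff]
    exact fun h => absurd (h.2.2 r hr) hne
  · simp only [Set.mem_singleton_iff, forall_eq] at hx hy
    have hrest : (∀ t ≠ s, x t = y t) ↔ ∀ t ≠ s, x' t = y' t :=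
      ⟨fun _ t ht => hxy' t ht, fun _ t ht => hxy t ht⟩
    simp only [siteUnit, Matrix.of_apply, hx, hy, hrest]

theorem siteUnit_mul_apply (s : Γ) (i j : Fin d) (M : Op Γ d) (x y : Γ → Fin d) :
    (siteUnit s i j * M) x y = if x s = i then M (Function.update x s j) y else 0 := by
  rw [Matrix.mul_apply, Finset.sum_eq_single (Function.update x s j)]
  · by_cases h : x s = i <;> simp [siteUnit, h, Function.update_apply]
  · intro z _ hz
    simp only [siteUnit, Matrix.of_apply, ite_mul, one_mul, zero_mul, ite_eq_right_iff]
    rintro ⟨-, hzs, hz'⟩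
    refine absurd (funext fun t => ?_) hz
    by_cases ht : t = s
    · subst ht; simp [hzs]
    · simp [ht, hz' t ht]
  · simp

theorem mul_siteUnit_apply (s : Γ) (i j : Fin d) (M : Op Γ d) (x y : Γ → Fin d) :
    (M * siteUnit s i j) x y = if y s = j then M x (Function.update y s i) else 0 := by
  rw [Matrix.mul_apply, Finset.sum_eq_single (Function.update y s i)]
  · by_cases h : y s = j <;> simp [siteUnit, h, Function.update_apply]
  · intro z _ hz
    simp only [siteUnit, Matrix.of_apply, mul_ite, mul_one, mul_zero, ite_eq_right_iff]
    rintro ⟨hzs, -, hz'⟩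
    refine absurd (funext fun t => ?_) hz
    by_cases ht : t = s
    · subst ht; simp [hzs]
    · simp [ht, hz' t ht]
  · simp

theorem sum_siteUnit_mul_siteSlice (r : Γ) (O : Op Γ d) :
    ∑ i, ∑ j, siteUnit r i j * siteSlice r i j O = O := by
  ext x y
  simp only [Matrix.sum_apply, siteUnit_mul_apply, siteSlice, Matrix.of_apply,
    Function.update_self, Function.update_idem]
  simp [eq_comm, Function.update_eq_self]

end SiteUnit

section Locality

variable {Γ : Type*} [Fintype Γ] [DecidableEq Γ] {d : ℕ} {S T : Set Γ} {M N O : Op Γ d}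

theorem SupportedOn.induction_on {P : Op Γ d → Prop} (hO : SupportedOn S O)
    (empty : ∀ O, SupportedOn ∅ O → P O) (add : ∀ M N, P M → P N → P (M + N))
    (siteUnit_mul : ∀ s ∈ S, ∀ i j M, P M → P (siteUnit s i j * M)) : P O := by
  suffices ∀ F : Finset Γ, ↑F ⊆ S → ∀ O, SupportedOn (↑F : Set Γ) O → P O from
    this (Set.toFinite S).toFinset (by simp) O (by simpa using hO)
  intro F
  induction F using Finset.induction_on with
  | empty => exact fun _ O hO => empty O (by simpa using hO)
  | insert r F hrF IH =>
    intro hF O hO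
    have hslice : ∀ i j, P (_root_.siteSlice r i j O) := fun i j => by
      refine IH (fun t ht => hF (by simp [ht])) _ ?_
      simpa [Set.insert_sdiff_self_of_notMem, hrF] using
        hO.siteSlice (Finset.mem_coe.2 (Finset.mem_insert_self r F)) i j
    have h0 : P 0 := empty 0 (supportedOn_zero ∅)
    rw [← sum_siteUnit_mul_siteSlice r O]
    exact Finset.sum_induction _ P add h0 fun i _ => Finset.sum_induction _ P add h0
      fun j _ => siteUnit_mul r (hF (by simp)) i j _ (hslice i j)

theorem SupportedOn.commute_siteUnit (hM : SupportedOn S M) {s : Γ} (hs : s ∉ S) (i j : Fin d) :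
    Commute M (siteUnit s i j) := by
  ext x y
  rw [mul_siteUnit_apply, siteUnit_mul_apply]
  by_cases hx : x s = i <;> by_cases hy : y s = j <;> simp only [hx, hy, if_true, if_false]
  · by_cases hxy : ∀ r ∉ S, x r = Function.update y s i r
    · refine hM.2 _ _ _ _ (fun r hr => ?_) (fun r hr => ?_) hxy fun r hr => ?_
      · rw [Function.update_of_ne (ne_of_mem_of_not_mem hr hs)]
      · rw [Function.update_of_ne (ne_of_mem_of_not_mem hr hs)]
      · by_cases hrs : r = s
        · subst hrs; simp [hy]
        · simpa [Function.update_of_ne hrs] using hxy r hr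
    · push Not at hxy
      obtain ⟨r, hr, hne⟩ := hxy
      have hrs : r ≠ s := by rintro rfl; simp [hx] at hne
      rw [hM.1 _ _ ⟨r, hr, hne⟩, hM.1 _ _ ⟨r, hr, by simpa [Function.update_of_ne hrs] using hne⟩]
  · exact (hM.1 _ _ ⟨s, hs, by simp [Ne.symm hy]⟩).symm
  · exact hM.1 _ _ ⟨s, hs, by simp [hx]⟩

theorem SupportedOn.commute (hM : SupportedOn S M) (hN : SupportedOn T N) (hST : Disjoint S T) :
    Commute M N :=
  hM.induction_on (fun _ hO => commute_of_supportedOn_empty hO N) (fun _ _ => Commute.add_left)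
    fun _ hs i j _ h => ((hN.commute_siteUnit (Set.disjoint_left.mp hST hs) i j).symm).mul_left h

theorem supportedOn_of_commute_siteUnit (h : ∀ s ∉ S, ∀ i j, Commute M (siteUnit s i j)) :
    SupportedOn S M := by
  have hswap : ∀ s ∉ S, ∀ (i j : Fin d) (x y : Γ → Fin d),
      (if y s = j then M x (Function.update y s i) else 0) =
        if x s = i then M (Function.update x s j) y else 0 := fun s hs i j x y => by
    rw [← mul_siteUnit_apply, ← siteUnit_mul_apply, (h s hs i j).eq]
  have hvanish : ∀ s ∉ S, ∀ x y : Γ → Fin d, x s ≠ y s → M x y = 0 := fun s hs x y hne => by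
    simpa [hne] using hswap s hs (y s) (y s) x y
  have hmove : ∀ s ∉ S, ∀ (x y : Γ → Fin d) (k : Fin d), x s = y s →
      M (Function.update x s k) (Function.update y s k) = M x y := fun s hs x y k hxy => by
    simpa [← hxy] using hswap s hs k (y s) (Function.update x s k) y
  refine ⟨fun x y ⟨r, hr, hne⟩ => hvanish r hr x y hne, fun x y x' y' hx hy hxy hxy' => ?_⟩
  have hreplace : ∀ F : Finset Γ, (∀ t ∈ F, t ∉ S) →
      M (F.piecewise x' x) (F.piecewise y' y) = M x y := by
    intro F
    induction F using Finset.induction_on with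
    | empty => simp
    | insert s F hsF IH =>
      intro hF
      have hs : s ∉ S := hF s (Finset.mem_insert_self s F)
      rw [Finset.piecewise_insert, Finset.piecewise_insert, hxy' s hs,
        hmove s hs _ _ _ (by simpa [Finset.piecewise_eq_of_notMem _ _ _ hsF] using hxy s hs)]
      exact IH fun t ht => hF t (Finset.mem_insert_of_mem ht)
  classical
  have hpiece : ∀ z z' : Γ → Fin d, (∀ t ∈ S, z t = z' t) →
      (Finset.univ.filter (· ∉ S)).piecewise z' z = z' := fun z z' hzz' => by
    ext t
    by_cases ht : t ∈ S <;> simp [Finset.piecewise, ht, hzz']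
  rw [← hreplace _ fun t ht => (Finset.mem_filter.mp ht).2, hpiece x x' hx, hpiece y y' hy]

end Locality

section Unitary

variable {ι : Type*} [Fintype ι] [DecidableEq ι] {M N : Matrix ι ι ℂ}

theorem isUnitaryMat_iff_mem_unitary : IsUnitaryMat M ↔ M ∈ unitary (Matrix ι ι ℂ) := Iff.rfl

theorem isUnitaryMat_one : IsUnitaryMat (1 : Matrix ι ι ℂ) :=
  isUnitaryMat_iff_mem_unitary.2 (one_mem _)

theorem IsUnitaryMat.mul (hM : IsUnitaryMat M) (hN : IsUnitaryMat N) : IsUnitaryMat (M * N) :=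
  isUnitaryMat_iff_mem_unitary.2 (mul_mem hM hN)

theorem IsUnitaryMat.conjTranspose (hM : IsUnitaryMat M) : IsUnitaryMat Mᴴ :=
  isUnitaryMat_iff_mem_unitary.2 (Unitary.star_mem hM)

end Unitary

section Symmetric

variable {Γ : Type*} [Fintype Γ] [DecidableEq Γ] {d : ℕ} {G : Type*}
  {u : G → Matrix (Fin d) (Fin d) ℂ} {M N : Op Γ d}

theorem isGSymm_one : IsGSymm u (1 : Op Γ d) := fun g => Commute.one_left (symOp u g)

theorem IsGSymm.mul (hM : IsGSymm u M) (hN : IsGSymm u N) : IsGSymm u (M * N) :=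
  fun g => Commute.mul_left (hM g) (hN g)

/-- The inverse of a unitary commutes with whatever the unitary commutes with. -/
theorem IsGSymm.conjTranspose (hM : IsGSymm u M) (hMu : IsUnitaryMat M) : IsGSymm u Mᴴ := by
  intro g
  calc Mᴴ * symOp u g = Mᴴ * (symOp u g * M) * Mᴴ := by
        rw [Matrix.mul_assoc, Matrix.mul_assoc, hMu.2, Matrix.mul_one]
    _ = symOp u g * Mᴴ := by
        rw [← hM g, ← Matrix.mul_assoc, hMu.1, Matrix.one_mul]

end Symmetric

section Conjugation

variable {Γ : Type*} [Fintype Γ] [DecidableEq Γ] {d : ℕ} {S T : Set Γ} {V O : Op Γ d}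

theorem IsUnitaryMat.conj_mul (hV : IsUnitaryMat V) (M N : Op Γ d) :
    Vᴴ * (M * N) * V = (Vᴴ * M * V) * (Vᴴ * N * V) := by
  simp only [Matrix.mul_assoc, ← Matrix.mul_assoc V Vᴴ, hV.2, Matrix.one_mul]

theorem SupportedOn.conj (hO : SupportedOn S O) (hV : IsUnitaryMat V)
    (hVS : ∀ s ∈ S, ∀ i j, SupportedOn T (Vᴴ * siteUnit s i j * V)) :
    SupportedOn T (Vᴴ * O * V) := by
  refine hO.induction_on (P := fun O => SupportedOn T (Vᴴ * O * V)) (fun O hO => ?_)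
    (fun M N hM hN => ?_) fun s hs i j M hM => ?_
  · rw [Matrix.mul_assoc, (commute_of_supportedOn_empty hO V).eq, ← Matrix.mul_assoc, hV.1,
      Matrix.one_mul]
    exact hO.mono (Set.empty_subset T)
  · rw [Matrix.mul_add, Matrix.add_mul]
    exact hM.add hN
  · rw [hV.conj_mul]
    exact (hVS s hs i j).mul hM

theorem IsStrictLPU.conjTranspose [MetricSpace Γ] {ξ : ℝ} {U : Op Γ d} (hU : IsStrictLPU ξ U) :
    IsStrictLPU ξ Uᴴ := by
  refine ⟨hU.1.conjTranspose, fun r O hO => ?_⟩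
  rw [Matrix.conjTranspose_conjTranspose]
  refine supportedOn_of_commute_siteUnit fun s hs i j => ?_
  have hdisj : Disjoint {r} (Metric.closedBall s ξ) := by
    simpa [dist_comm] using hs
  have hcomm := hO.commute (hU.2 s _ (supportedOn_siteUnit s i j)) hdisj
  have hback : U * (Uᴴ * siteUnit s i j * U) * Uᴴ = siteUnit s i j := by
    simp only [← Matrix.mul_assoc, hU.1.2, Matrix.one_mul]
    rw [Matrix.mul_assoc, hU.1.2, Matrix.mul_one]
  have hsplit := hU.1.conjTranspose.conj_mul
  simp only [Matrix.conjTranspose_conjTranspose] at hsplit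
  change _ * _ = _ * _
  rw [← hback, ← hsplit, ← hsplit, hcomm.eq]

end Conjugation

section Stack

variable {Λ₁ Λ₂ : Type*} {d : ℕ}

def stack (M : Op Λ₁ d) (N : Op Λ₂ d) : Op (Λ₁ ⊕ Λ₂) d :=
  Matrix.reindex (Equiv.sumArrowEquivProdArrow Λ₁ Λ₂ (Fin d)).symm
    (Equiv.sumArrowEquivProdArrow Λ₁ Λ₂ (Fin d)).symm (Matrix.kroneckerMap (· * ·) M N)

theorem stack_apply (M : Op Λ₁ d) (N : Op Λ₂ d) (x y : Λ₁ ⊕ Λ₂ → Fin d) :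
    stack M N x y = M (x ∘ Sum.inl) (y ∘ Sum.inl) * N (x ∘ Sum.inr) (y ∘ Sum.inr) := rfl

theorem stack_conjTranspose (M : Op Λ₁ d) (N : Op Λ₂ d) : (stack M N)ᴴ = stack Mᴴ Nᴴ := by
  simp only [stack, Matrix.conjTranspose_reindex]
  exact congrArg _ (Matrix.conjTranspose_kronecker M N)

theorem SupportedOn.stack {S : Set Λ₁} {T : Set Λ₂} {M : Op Λ₁ d} {N : Op Λ₂ d}
    (hM : SupportedOn S M) (hN : SupportedOn T N) :
    SupportedOn (Sum.inl '' S ∪ Sum.inr '' T) (stack M N) := by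
  refine ⟨fun x y ⟨s, hs, hne⟩ => ?_, fun x y x' y' hx hy hxy hxy' => ?_⟩
  · rcases s with r | r
    · rw [stack_apply, hM.1 _ _ ⟨r, fun hr => hs (by simpa using hr), hne⟩, zero_mul]
    · rw [stack_apply, hN.1 _ _ ⟨r, fun hr => hs (by simpa using hr), hne⟩, mul_zero]
  · rw [stack_apply, stack_apply]
    congr 1
    · exact hM.2 _ _ _ _ (fun r hr => hx _ (by simpa using hr))
        (fun r hr => hy _ (by simpa using hr)) (fun r hr => hxy _ (by simpa using hr))
        fun r hr => hxy' _ (by simpa using hr)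
    · exact hN.2 _ _ _ _ (fun r hr => hx _ (by simpa using hr))
        (fun r hr => hy _ (by simpa using hr)) (fun r hr => hxy _ (by simpa using hr))
        fun r hr => hxy' _ (by simpa using hr)

variable [Fintype Λ₁] [Fintype Λ₂]

theorem stack_one_one : stack (1 : Op Λ₁ d) (1 : Op Λ₂ d) = 1 := by
  simp only [stack, Matrix.reindex_apply]
  rw [show Matrix.kroneckerMap (· * ·) (1 : Op Λ₁ d) (1 : Op Λ₂ d) = 1 from
    Matrix.one_kronecker_one]
  exact Matrix.submatrix_one_equiv _

variable [DecidableEq Λ₁] [DecidableEq Λ₂]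

theorem stack_mul (M M' : Op Λ₁ d) (N N' : Op Λ₂ d) :
    stack M N * stack M' N' = stack (M * M') (N * N') := by
  simp only [stack, Matrix.reindex_apply, Matrix.submatrix_mul_equiv]
  congr 1
  exact (Matrix.mul_kronecker_mul M M' N N').symm

theorem IsUnitaryMat.stack {M : Op Λ₁ d} {N : Op Λ₂ d} (hM : IsUnitaryMat M)
    (hN : IsUnitaryMat N) : IsUnitaryMat (stack M N) := by
  constructor
  · rw [stack_conjTranspose, stack_mul, hM.1, hN.1, stack_one_one]
  · rw [stack_conjTranspose, stack_mul, hM.2, hN.2, stack_one_one]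

theorem IsGSymm.stack {G : Type*} {u : G → Matrix (Fin d) (Fin d) ℂ} {M : Op Λ₁ d}
    {N : Op Λ₂ d} (hM : IsGSymm u M) (hN : IsGSymm u N) : IsGSymm u (stack M N) := by
  have hsym : ∀ g, (symOp u g : Op (Λ₁ ⊕ Λ₂) d) = _root_.stack (symOp u g) (symOp u g) := by
    intro g
    ext x y
    simp [symOp, stack_apply, Fintype.prod_sum_type]
  intro g
  rw [hsym, stack_mul, stack_mul, hM g, hN g]

theorem siteUnit_inl (r : Λ₁) (i j : Fin d) :
    siteUnit (Sum.inl r) i j = stack (siteUnit r i j) (1 : Op Λ₂ d) := by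
  ext x y
  simp only [siteUnit, stack_apply, Matrix.of_apply, Matrix.one_apply, funext_iff, Sum.forall,
    Function.comp_apply, ne_eq, Sum.inl.injEq, reduceCtorEq, not_false_eq_true, forall_const,
    ite_mul, one_mul, zero_mul]
  by_cases h : ∀ t, x (Sum.inr t) = y (Sum.inr t) <;> simp [h]

theorem siteUnit_inr (r : Λ₂) (i j : Fin d) :
    siteUnit (Sum.inr r) i j = stack (1 : Op Λ₁ d) (siteUnit r i j) := by
  ext x y
  simp only [siteUnit, stack_apply, Matrix.of_apply, Matrix.one_apply, funext_iff, Sum.forall,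
    Function.comp_apply, ne_eq, Sum.inr.injEq, reduceCtorEq, not_false_eq_true, forall_const,
    mul_ite, mul_one, mul_zero]
  by_cases h : ∀ t, x (Sum.inl t) = y (Sum.inl t) <;> simp [h]

theorem supportedOn_conj_stack_one {S₁ T₁ : Set Λ₁} {S₂ : Set Λ₂} {O : Op (Λ₁ ⊕ Λ₂) d}
    {U : Op Λ₁ d} (hO : SupportedOn (Sum.inl '' S₁ ∪ Sum.inr '' S₂) O) (hU : IsUnitaryMat U)
    (hUT : ∀ s ∈ S₁, ∀ i j, SupportedOn T₁ (Uᴴ * siteUnit s i j * U)) :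
    SupportedOn (Sum.inl '' T₁ ∪ Sum.inr '' S₂) ((stack U 1)ᴴ * O * stack U 1) := by
  refine hO.conj (hU.stack isUnitaryMat_one) fun s hs i j => ?_
  rw [stack_conjTranspose, Matrix.conjTranspose_one]
  rcases s with r | r
  · rw [siteUnit_inl, stack_mul, stack_mul, Matrix.mul_one, Matrix.mul_one]
    exact ((hUT r (by simpa using hs) i j).stack (supportedOn_one ∅)).mono
      (Set.union_subset_union_right _ (Set.image_mono (Set.empty_subset _)))
  · rw [siteUnit_inr, stack_mul, stack_mul, Matrix.mul_one, Matrix.one_mul, Matrix.mul_one, hU.1]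
    exact ((supportedOn_one ∅).stack (supportedOn_siteUnit r i j)).mono
      (Set.union_subset_union (Set.image_mono (Set.empty_subset _)) (by simpa using hs))

end Stack

section Swap

variable {Λ : Type*} {d : ℕ}

open Classical in
noncomputable def swapSites (Q : Set Λ) : Λ ⊕ Λ → Λ ⊕ Λ :=
  Sum.elim (fun r => if r ∈ Q then Sum.inr r else Sum.inl r)
    fun r => if r ∈ Q then Sum.inl r else Sum.inr r

theorem swapSites_involutive (Q : Set Λ) : Function.Involutive (swapSites Q) := by
  rintro (r | r) <;> by_cases hr : r ∈ Q <;> simp [swapSites, hr]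

theorem comp_swapSites_eq_iff (Q : Set Λ) {α : Type*} (x y : Λ ⊕ Λ → α) :
    x ∘ swapSites Q = y ↔ x = y ∘ swapSites Q := by
  have hσ := (swapSites_involutive Q).comp_self
  exact ⟨fun h => by rw [← h, Function.comp_assoc, hσ, Function.comp_id],
    fun h => by rw [h, Function.comp_assoc, hσ, Function.comp_id]⟩

theorem swapSites_empty : swapSites (∅ : Set Λ) = id := by
  ext (r | r) <;> simp [swapSites]

theorem swapSites_union {P R : Set Λ} (hPR : Disjoint P R) :
    swapSites (P ∪ R) = swapSites P ∘ swapSites R := by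
  ext (r | r) <;> by_cases hP : r ∈ P <;> by_cases hR : r ∈ R <;> simp [swapSites, hP, hR]
  all_goals exact Set.disjoint_left.mp hPR hP hR

theorem swapSites_compl_comp (D : Set Λ) : swapSites Dᶜ ∘ swapSites D = Sum.swap := by
  ext (r | r) <;> by_cases hD : r ∈ D <;> simp [swapSites, hD]

variable [Fintype Λ]

noncomputable def swapMat (Q : Set Λ) : Op (Λ ⊕ Λ) d :=
  Matrix.of fun x y => if x ∘ swapSites Q = y then 1 else 0

theorem swapMat_empty : swapMat (∅ : Set Λ) = (1 : Op (Λ ⊕ Λ) d) := by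
  ext x y
  simp [swapMat, swapSites_empty, Matrix.one_apply]

theorem swapMat_conjTranspose (Q : Set Λ) : (swapMat Q : Op (Λ ⊕ Λ) d)ᴴ = swapMat Q := by
  ext x y
  have hsymm : y ∘ swapSites Q = x ↔ x ∘ swapSites Q = y := by
    rw [comp_swapSites_eq_iff, eq_comm]
  simp [swapMat, Matrix.conjTranspose_apply, hsymm]

theorem supportedOn_swapMat (Q : Set Λ) :
    SupportedOn (Sum.inl '' Q ∪ Sum.inr '' Q) (swapMat Q : Op (Λ ⊕ Λ) d) := by
  have hfix : ∀ s ∉ Sum.inl '' Q ∪ Sum.inr '' Q, swapSites Q s = s := by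
    rintro (r | r) hs <;> simp_all [swapSites]
  have hmaps : ∀ s ∈ Sum.inl '' Q ∪ Sum.inr '' Q,
      swapSites Q s ∈ Sum.inl '' Q ∪ Sum.inr '' Q := by
    rintro (r | r) hs <;> simp_all [swapSites]
  refine ⟨fun x y ⟨s, hs, hne⟩ => ?_, fun x y x' y' hx hy hxy hxy' => ?_⟩
  · simp only [swapMat, Matrix.of_apply, ite_eq_right_iff, one_ne_zero, imp_false]
    exact fun h => hne (by rw [← h, Function.comp_apply, hfix s hs])
  · simp only [swapMat, Matrix.of_apply, funext_iff, Function.comp_apply]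
    congr 1
    refine propext (forall_congr' fun s => ?_)
    by_cases hs : s ∈ Sum.inl '' Q ∪ Sum.inr '' Q
    · rw [hx _ (hmaps s hs), hy s hs]
    · rw [hfix s hs]
      exact iff_of_true (hxy s hs) (hxy' s hs)

theorem supportedOn_swapMat_singleton {r : Λ} {X X' : Set Λ} (h : r ∈ X ↔ r ∈ X') :
    SupportedOn (Sum.inl '' X ∪ Sum.inr '' X') (swapMat {r} : Op (Λ ⊕ Λ) d) ∨
      SupportedOn (Sum.inl '' X ∪ Sum.inr '' X')ᶜ (swapMat {r} : Op (Λ ⊕ Λ) d) := by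
  by_cases hr : r ∈ X
  · exact .inl <| (supportedOn_swapMat {r}).mono <| Set.union_subset_union
      (Set.image_mono (Set.singleton_subset_iff.2 hr))
      (Set.image_mono (Set.singleton_subset_iff.2 (h.1 hr)))
  · refine .inr <| (supportedOn_swapMat {r}).mono ?_
    rw [← Set.inl_compl_union_inr_compl]
    exact Set.union_subset_union (Set.image_mono (Set.singleton_subset_iff.2 hr))
      (Set.image_mono (Set.singleton_subset_iff.2 (mt h.2 hr)))

variable [DecidableEq Λ]

theorem swapMat_mul_apply (Q : Set Λ) (M : Op (Λ ⊕ Λ) d) (x y : Λ ⊕ Λ → Fin d) :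
    (swapMat Q * M : Op (Λ ⊕ Λ) d) x y = M (x ∘ swapSites Q) y := by
  simp [Matrix.mul_apply, swapMat]

theorem mul_swapMat_apply (Q : Set Λ) (M : Op (Λ ⊕ Λ) d) (x y : Λ ⊕ Λ → Fin d) :
    (M * swapMat Q : Op (Λ ⊕ Λ) d) x y = M x (y ∘ swapSites Q) := by
  simp [Matrix.mul_apply, swapMat, comp_swapSites_eq_iff]

theorem swapMat_conj_apply (Q : Set Λ) (M : Op (Λ ⊕ Λ) d) (x y : Λ ⊕ Λ → Fin d) :
    (swapMat Q * M * swapMat Q : Op (Λ ⊕ Λ) d) x y = M (x ∘ swapSites Q) (y ∘ swapSites Q) := by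
  rw [mul_swapMat_apply, swapMat_mul_apply]

theorem swapMat_conj_union {P R : Set Λ} (hPR : Disjoint P R) (M : Op (Λ ⊕ Λ) d) :
    swapMat (P ∪ R) * M * swapMat (P ∪ R) =
      swapMat P * (swapMat R * M * swapMat R) * swapMat P := by
  ext x y
  simp only [swapMat_conj_apply, swapSites_union hPR, Function.comp_assoc]

theorem swapMat_mul_self (Q : Set Λ) : (swapMat Q : Op (Λ ⊕ Λ) d) * swapMat Q = 1 := by
  ext x y
  rw [swapMat_mul_apply]
  simp [swapMat, Function.comp_assoc, (swapSites_involutive Q).comp_self, Matrix.one_apply]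

theorem isUnitaryMat_swapMat (Q : Set Λ) : IsUnitaryMat (swapMat Q : Op (Λ ⊕ Λ) d) := by
  constructor <;> rw [swapMat_conjTranspose, swapMat_mul_self]

theorem isGSymm_swapMat {G : Type*} (u : G → Matrix (Fin d) (Fin d) ℂ) (Q : Set Λ) :
    IsGSymm u (swapMat Q : Op (Λ ⊕ Λ) d) := by
  intro g
  ext x y
  rw [swapMat_mul_apply, mul_swapMat_apply]
  simp only [symOp, Matrix.of_apply, Function.comp_apply]
  exact Fintype.prod_equiv (swapSites_involutive Q).toPerm _ _ fun s => by
    simp [swapSites_involutive Q s]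

theorem swapMat_compl_conj_swapMat_conj (D : Set Λ) (M N : Op Λ d) :
    swapMat Dᶜ * (swapMat D * stack M N * swapMat D) * swapMat Dᶜ = stack N M := by
  ext x y
  simp only [swapMat_conj_apply, Function.comp_assoc, swapSites_compl_comp, stack_apply]
  exact mul_comm _ _

theorem supportedOn_stack_one_conj_swapMat {D T : Set Λ} {U : Op Λ d} (hU : IsUnitaryMat U)
    (hDT : D ⊆ T) (hUT : ∀ s ∈ D, ∀ i j, SupportedOn T (Uᴴ * siteUnit s i j * U)) :
    SupportedOn (Sum.inl '' T ∪ Sum.inr '' D)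
      ((stack U 1)ᴴ * swapMat D * stack U 1 * swapMat D) :=
  (supportedOn_conj_stack_one (supportedOn_swapMat D) hU hUT).mul
    ((supportedOn_swapMat D).mono (Set.union_subset_union_left _ (Set.image_mono hDT)))

end Swap

theorem closedBall_subset_or_subset_compl_of_notMem_thickBd {Λ : Type*} [MetricSpace Λ]
    {ℓ : ℝ} {S : Set Λ} {a : Λ} (ha : a ∉ thickBd ℓ S) :
    Metric.closedBall a ℓ ⊆ S ∨ Metric.closedBall a ℓ ⊆ Sᶜ := by
  by_contra h
  push Not at h
  obtain ⟨t, ht, htS⟩ := Set.not_subset.1 h.1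
  obtain ⟨t', ht', ht'S⟩ := Set.not_subset.1 h.2
  rw [Metric.mem_closedBall, dist_comm] at ht ht'
  exact ha ⟨⟨t', not_not.1 ht'S, ht'⟩, ⟨t, htS, ht⟩⟩

namespace LatticeFlow

variable {d : ℕ} {G : Type} [Group G] {u : G → Matrix (Fin d) (Fin d) ℂ} (Φ : LatticeFlow d G u)

theorem omega_stack_one {Λ₁ Λ₂ : Type} [Fintype Λ₁] [DecidableEq Λ₁] [Fintype Λ₂]
    [DecidableEq Λ₂] {U : Op Λ₁ d} (hU : IsUnitaryMat U) (hUG : IsGSymm u U)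
    (A₁ B₁ : Set Λ₁) (A₂ B₂ : Set Λ₂) :
    Φ.omega (Λ₁ ⊕ Λ₂) (Sum.inl '' A₁ ∪ Sum.inr '' A₂) (Sum.inl '' B₁ ∪ Sum.inr '' B₂)
      (stack U 1) = Φ.omega Λ₁ A₁ B₁ U :=
  (Φ.stacking _ _ _ _ _ _ U 1 hU hUG isUnitaryMat_one isGSymm_one).trans
    (by rw [Φ.norm_one, add_zero])

theorem omega_one_stack {Λ₁ Λ₂ : Type} [Fintype Λ₁] [DecidableEq Λ₁] [Fintype Λ₂]
    [DecidableEq Λ₂] {U : Op Λ₂ d} (hU : IsUnitaryMat U) (hUG : IsGSymm u U)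
    (A₁ B₁ : Set Λ₁) (A₂ B₂ : Set Λ₂) :
    Φ.omega (Λ₁ ⊕ Λ₂) (Sum.inl '' A₁ ∪ Sum.inr '' A₂) (Sum.inl '' B₁ ∪ Sum.inr '' B₂)
      (stack 1 U) = Φ.omega Λ₂ A₂ B₂ U :=
  (Φ.stacking _ _ _ _ _ _ 1 U isUnitaryMat_one isGSymm_one hU hUG).trans
    (by rw [Φ.norm_one, zero_add])

theorem omega_mul_mul {Λ' : Type} [Fintype Λ'] [DecidableEq Λ'] {A B : Set Λ'} {V M W : Op Λ' d}
    (hV : IsUnitaryMat V) (hVG : IsGSymm u V) (hVA : SupportedOn A V ∨ SupportedOn Aᶜ V)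
    (hM : IsUnitaryMat M) (hMG : IsGSymm u M)
    (hW : IsUnitaryMat W) (hWG : IsGSymm u W) (hWB : SupportedOn B W ∨ SupportedOn Bᶜ W) :
    Φ.omega Λ' A B (V * M * W) = Φ.omega Λ' A B M := by
  rw [Matrix.mul_assoc, Φ.left_inv _ _ _ _ _ (hM.mul hW) (hMG.mul hWG) hV hVG hVA,
    Φ.right_inv _ _ _ _ _ hM hMG hW hWG hWB]

section Doubled

variable {Λ : Type} [Fintype Λ] [DecidableEq Λ]

def SwapInvariant (A B : Set (Λ ⊕ Λ)) (Q : Set Λ) : Prop :=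
  ∀ M : Op (Λ ⊕ Λ) d, IsUnitaryMat M → IsGSymm u M →
    Φ.omega (Λ ⊕ Λ) A B (swapMat Q * M * swapMat Q) = Φ.omega (Λ ⊕ Λ) A B M

variable {Φ} {A B : Set (Λ ⊕ Λ)}

theorem SwapInvariant.union {P R : Set Λ} (hP : Φ.SwapInvariant A B P)
    (hR : Φ.SwapInvariant A B R) (hPR : Disjoint P R) : Φ.SwapInvariant A B (P ∪ R) :=
  fun M hM hMG => by
    rw [swapMat_conj_union hPR, hP _ (((isUnitaryMat_swapMat R).mul hM).mul
      (isUnitaryMat_swapMat R)) (((isGSymm_swapMat u R).mul hMG).mul (isGSymm_swapMat u R)),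
      hR M hM hMG]

/-- Swap site by site: each single site lies inside or outside both regions of a pair, so
axioms (1) and (2) apply to its swap. -/
theorem swapInvariant_of_agree {A A' B B' Q : Set Λ} (hA : ∀ r ∈ Q, r ∈ A ↔ r ∈ A')
    (hB : ∀ r ∈ Q, r ∈ B ↔ r ∈ B') :
    Φ.SwapInvariant (Sum.inl '' A ∪ Sum.inr '' A') (Sum.inl '' B ∪ Sum.inr '' B') Q := by
  induction Q, Set.toFinite Q using Set.Finite.induction_on with
  | empty =>
    intro M _ _
    rw [swapMat_empty, Matrix.one_mul, Matrix.mul_one]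
  | @insert r Q hrQ _ ih =>
    rw [Set.insert_eq]
    refine SwapInvariant.union (fun M hM hMG => ?_)
      (ih (fun t ht => hA t (.inr ht)) fun t ht => hB t (.inr ht))
      (Set.disjoint_singleton_left.2 hrQ)
    exact Φ.omega_mul_mul (isUnitaryMat_swapMat _) (isGSymm_swapMat u _)
      (supportedOn_swapMat_singleton (hA r (.inl rfl))) hM hMG (isUnitaryMat_swapMat _)
      (isGSymm_swapMat u _) (supportedOn_swapMat_singleton (hB r (.inl rfl)))

end Doubled

theorem omega_eq_of_agree_off {Λ : Type} [Fintype Λ] [DecidableEq Λ] {U : Op Λ d}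
    (hU : IsUnitaryMat U) (hUG : IsGSymm u U) {A A' B D T : Set Λ}
    (hAA' : ∀ r ∈ Dᶜ, r ∈ A ↔ r ∈ A') (hDT : D ⊆ T) (hTB : T ⊆ B ∨ T ⊆ Bᶜ)
    (hUT : ∀ s ∈ D, ∀ i j, SupportedOn T (Uᴴ * siteUnit s i j * U)) :
    Φ.omega Λ A B U = Φ.omega Λ A' B U := by
  set W : Op (Λ ⊕ Λ) d := stack U 1
  have hW : IsUnitaryMat W := hU.stack isUnitaryMat_one
  have hWG : IsGSymm u W := hUG.stack isGSymm_one
  set K := Wᴴ * swapMat D * W * swapMat D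
  have hKu : IsUnitaryMat K := ((hW.conjTranspose.mul (isUnitaryMat_swapMat D)).mul hW).mul
    (isUnitaryMat_swapMat D)
  have hKG : IsGSymm u K := (((hWG.conjTranspose hW).mul (isGSymm_swapMat u D)).mul hWG).mul
    (isGSymm_swapMat u D)
  have hK := supportedOn_stack_one_conj_swapMat hU hDT hUT
  have hKB : SupportedOn (Sum.inl '' B ∪ Sum.inr '' B) K ∨
      SupportedOn (Sum.inl '' B ∪ Sum.inr '' B)ᶜ K := by
    refine hTB.imp (fun h => hK.mono ?_) fun h => hK.mono ?_
    · exact Set.union_subset_union (Set.image_mono h) (Set.image_mono (hDT.trans h))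
    · rw [← Set.inl_compl_union_inr_compl]
      exact Set.union_subset_union (Set.image_mono h) (Set.image_mono (hDT.trans h))
  have hWK : W * K = swapMat D * W * swapMat D := by
    simp only [K, ← Matrix.mul_assoc, hW.2, Matrix.one_mul]
  set At : Set (Λ ⊕ Λ) := Sum.inl '' A ∪ Sum.inr '' A'
  set Bt : Set (Λ ⊕ Λ) := Sum.inl '' B ∪ Sum.inr '' B
  calc Φ.omega Λ A B U
      = Φ.omega (Λ ⊕ Λ) At Bt W := (Φ.omega_stack_one hU hUG A B A' B).symm
    _ = Φ.omega (Λ ⊕ Λ) At Bt (W * K) := (Φ.right_inv _ _ _ _ _ hW hWG hKu hKG hKB).symm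
    _ = Φ.omega (Λ ⊕ Λ) At Bt (swapMat Dᶜ * (swapMat D * W * swapMat D) * swapMat Dᶜ) := by
        rw [hWK, swapInvariant_of_agree hAA' (fun _ _ => Iff.rfl) _
          (((isUnitaryMat_swapMat D).mul hW).mul (isUnitaryMat_swapMat D))
          (((isGSymm_swapMat u D).mul hWG).mul (isGSymm_swapMat u D))]
    _ = Φ.omega Λ A' B U := by
        rw [swapMat_compl_conj_swapMat_conj, Φ.omega_one_stack hU hUG A B A' B]

theorem omega_diff_singleton_left {Λ : Type} [Fintype Λ] [DecidableEq Λ] [MetricSpace Λ]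
    {ξ ℓ : ℝ} (hξ : 0 ≤ ξ) (hξℓ : ξ ≤ ℓ) {U : Op Λ d} (hU : IsStrictLPU ξ U)
    (hUG : IsGSymm u U) {A B : Set Λ} {a : Λ} (ha : a ∉ thickBd ℓ B) :
    Φ.omega Λ A B U = Φ.omega Λ (A \ {a}) B U :=
  Φ.omega_eq_of_agree_off hU.1 hUG (D := {a}) (T := Metric.closedBall a ξ)
    (fun r hr => by simp [Set.mem_compl_singleton_iff.1 hr])
    (Set.singleton_subset_iff.2 (Metric.mem_closedBall_self hξ))
    ((closedBall_subset_or_subset_compl_of_notMem_thickBd ha).imp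
      (Metric.closedBall_subset_closedBall hξℓ).trans
      (Metric.closedBall_subset_closedBall hξℓ).trans)
    fun s hs i j => hs ▸ hU.2 a _ (supportedOn_siteUnit a i j)

def dual : LatticeFlow d G u where
  omega Λ' _ _ A B U := Φ.omega Λ' B A Uᴴ
  left_inv Λ' _ _ A B U V hU hUG hV hVG hVA := by
    rw [Matrix.conjTranspose_mul]
    exact Φ.right_inv Λ' B A Uᴴ Vᴴ hU.conjTranspose (hUG.conjTranspose hU) hV.conjTranspose
      (hVG.conjTranspose hV) (hVA.imp SupportedOn.conjTranspose SupportedOn.conjTranspose)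
  right_inv Λ' _ _ A B U V hU hUG hV hVG hVB := by
    rw [Matrix.conjTranspose_mul]
    exact Φ.left_inv Λ' B A Uᴴ Vᴴ hU.conjTranspose (hUG.conjTranspose hU) hV.conjTranspose
      (hVG.conjTranspose hV) (hVB.imp SupportedOn.conjTranspose SupportedOn.conjTranspose)
  stacking Λ₁ Λ₂ _ _ _ _ A₁ B₁ A₂ B₂ U₁ U₂ hU₁ hU₁G hU₂ hU₂G := by
    simpa only [Matrix.conjTranspose_reindex, Matrix.conjTranspose_kronecker] using
      Φ.stacking Λ₁ Λ₂ B₁ A₁ B₂ A₂ U₁ᴴ U₂ᴴ hU₁.conjTranspose (hU₁G.conjTranspose hU₁)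
        hU₂.conjTranspose (hU₂G.conjTranspose hU₂)
  norm_one Λ' _ _ A B := by
    simpa only [Matrix.conjTranspose_one] using Φ.norm_one Λ' B A

theorem omega_diff_singleton_right {Λ : Type} [Fintype Λ] [DecidableEq Λ] [MetricSpace Λ]
    {ξ ℓ : ℝ} (hξ : 0 ≤ ξ) (hξℓ : ξ ≤ ℓ) {U : Op Λ d} (hU : IsStrictLPU ξ U)
    (hUG : IsGSymm u U) {A B : Set Λ} {b : Λ} (hb : b ∉ thickBd ℓ A) :
    Φ.omega Λ A B U = Φ.omega Λ A (B \ {b}) U := by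
  simpa only [dual, Matrix.conjTranspose_conjTranspose] using
    Φ.dual.omega_diff_singleton_left hξ hξℓ hU.conjTranspose (hUG.conjTranspose hU.1) hb

end LatticeFlow

theorem flow_site_removal_general
    {d : ℕ} {G : Type} [Group G]
    (u : G → Matrix (Fin d) (Fin d) ℂ)
    (Φ : LatticeFlow d G u)
    (Λ : Type) [Fintype Λ] [DecidableEq Λ] [MetricSpace Λ]
    (ξ : ℝ) (hξ : 0 ≤ ξ)
    (U : Matrix (Λ → Fin d) (Λ → Fin d) ℂ)
    (hU : IsStrictLPU ξ U) (hUG : IsGSymm u U)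
    (A B : Set Λ) :
    (∀ a ∈ A, a ∉ thickBd (4 * ξ) B →
      Φ.omega Λ A B U = Φ.omega Λ (A \ {a}) B U) ∧
    (∀ b ∈ B, b ∉ thickBd (4 * ξ) A →
      Φ.omega Λ A B U = Φ.omega Λ A (B \ {b}) U) :=
  ⟨fun _ _ ha => Φ.omega_diff_singleton_left hξ (by linarith) hU hUG ha,
    fun _ _ hb => Φ.omega_diff_singleton_right hξ (by linarith) hU hUG hb⟩

/-- Theorem 1.2: for a flow `Ω` and a `G`-symmetric strict LPU `U` with operator spreading
length `ξ`, (i) `Ω_{A,B}(U) = Ω_{A∖{a},B}(U)` for `a ∈ A` with `a ∉ ∂_{4ξ}B`, and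
(ii) `Ω_{A,B}(U) = Ω_{A,B∖{b}}(U)` for `b ∈ B` with `b ∉ ∂_{4ξ}A`. -/
theorem flow_site_removal
    {d : ℕ} (hd : 1 ≤ d) {G : Type} [Group G]
    (u : G → Matrix (Fin d) (Fin d) ℂ)
    (hu_unit : ∀ g, IsUnitaryMat (u g))
    (hu_mul : ∀ g h, u (g * h) = u g * u h)
    (Φ : LatticeFlow d G u)
    (Λ : Type) [Fintype Λ] [DecidableEq Λ] [MetricSpace Λ]
    (ξ : ℝ) (hξ : 0 ≤ ξ)
    (U : Matrix (Λ → Fin d) (Λ → Fin d) ℂ)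
    (hU : IsStrictLPU ξ U) (hUG : IsGSymm u U)
    (A B : Set Λ) :
    (∀ a ∈ A, a ∉ thickBd (4 * ξ) B →
      Φ.omega Λ A B U = Φ.omega Λ (A \ {a}) B U) ∧
    (∀ b ∈ B, b ∉ thickBd (4 * ξ) A →
      Φ.omega Λ A B U = Φ.omega Λ A (B \ {b}) U) :=
  flow_site_removal_general u Φ Λ ξ hξ U hU hUG A B
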